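/- arXiv:2201.07018 — 3 statements merged into one kernel-verified Lean document; each statement's English description precedes it below -/
import Mathlib

section
/- Let $a_1, a_2$ be real numbers with $a_1 > 0$ and $a_2 > 0$, and let $\lambda_1, \lambda_2$ be real numbers satisfying $\lambda_2 = \lambda_1 - 1$, $\lambda_1 \le 1/2$, and $\lambda_2 \le -1/2$. Then there exists $\eta > 0$ such that the symmetric matrix $S = \begin{pmatrix} (\tfrac12 - \lambda_1) a_1 & \tfrac12(a_2\lambda_1 + a_1\eta\lambda_2) \\ \tfrac12(a_2\lambda_1 + a_1\eta\lambda_2) & -(\lambda_2 + \tfrac12)\eta a_2 \end{pmatrix}$ is positive semi-definite. -/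
open Matrix

lemma quad_nonneg_aux (A B C x y : ℝ) (hA : 0 ≤ A) (hC : 0 ≤ C) (hd : B^2 ≤ A*C) :
    0 ≤ A*x^2 + 2*B*x*y + C*y^2 := by
  rcases eq_or_lt_of_le hA with h | h
  · have hB : B = 0 := by nlinarith [sq_nonneg B]
    subst hB
    rw [← h]
    nlinarith [sq_nonneg y]
  · nlinarith [sq_nonneg (A*x + B*y), mul_pos h h]

theorem stmt_1 (a1 a2 lam1 lam2 : ℝ) (ha1 : 0 < a1) (ha2 : 0 < a2)
    (hcons : lam2 = lam1 - 1) (hl1 : lam1 ≤ 1/2) (hl2 : lam2 ≤ -(1/2)) :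
    ∃ η : ℝ, 0 < η ∧
      (!![(1/2 - lam1) * a1, (a2 * lam1 + a1 * η * lam2) / 2;
          (a2 * lam1 + a1 * η * lam2) / 2, -(lam2 + 1/2) * η * a2] :
        Matrix (Fin 2) (Fin 2) ℝ).PosSemidef := by
  subst hcons
  have hq : 0 < 2*lam1^2 - 2*lam1 + 1 := by nlinarith [sq_nonneg (2*lam1 - 1)]
  have hl2' : lam1 - 1 < 0 := by linarith
  have hne1 : lam1 - 1 ≠ 0 := ne_of_lt hl2'
  have hsq : 0 < (lam1 - 1)^2 := by positivity
  set η : ℝ := a2 * (2*lam1^2 - 2*lam1 + 1) / (2 * a1 * (lam1-1)^2) with hηdef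
  have hηpos : 0 < η := div_pos (by positivity) (mul_pos (by positivity) hsq)
  refine ⟨η, hηpos, Matrix.PosSemidef.of_dotProduct_mulVec_nonneg ?_ ?_⟩
  · ext i j
    fin_cases i <;> fin_cases j <;> rfl
  · intro x
    have hA : 0 ≤ (1/2 - lam1) * a1 := by nlinarith
    have hC : 0 ≤ -((lam1-1) + 1/2) * η * a2 :=
      mul_nonneg (mul_nonneg (by linarith) hηpos.le) ha2.le
    have hdet : ((a2 * lam1 + a1 * η * (lam1-1)) / 2)^2 ≤
        ((1/2 - lam1) * a1) * (-((lam1-1) + 1/2) * η * a2) := by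
      have key : ((1/2 - lam1) * a1) * (-((lam1-1) + 1/2) * η * a2)
          - ((a2 * lam1 + a1 * η * (lam1-1)) / 2)^2
          = a2^2 * (2*lam1-1)^2 / (16*(lam1-1)^2) := by
        rw [hηdef]
        field_simp
        ring
      nlinarith [key, div_nonneg (by positivity : (0:ℝ) ≤ a2^2 * (2*lam1-1)^2)
        (by positivity : (0:ℝ) ≤ 16*(lam1-1)^2)]
    have key := quad_nonneg_aux ((1/2 - lam1) * a1) ((a2 * lam1 + a1 * η * (lam1-1)) / 2)
      (-((lam1-1) + 1/2) * η * a2) (x 0) (x 1) hA hC hdet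
    simp [Matrix.mulVec, dotProduct, Fin.sum_univ_two]
    nlinarith [key]
end

section
/- Let $a_1, a_2$ be real numbers with $a_1 < 0$ and $a_2 < 0$, and let $\lambda_1, \lambda_2$ satisfy $\lambda_2 = \lambda_1 - 1$, $\lambda_1 \ge 1/2$, and $\lambda_2 \ge -1/2$. Then there exists $\eta > 0$ such that the matrix $S = \begin{pmatrix} (\tfrac12 - \lambda_1) a_1 & \tfrac12(a_2\lambda_1 + a_1\eta\lambda_2) \\ \tfrac12(a_2\lambda_1 + a_1\eta\lambda_2) & -(\lambda_2 + \tfrac12)\eta a_2 \end{pmatrix}$ is positive semi-definite. -/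
open Matrix

theorem stmt_2 (a1 a2 lam1 lam2 : ℝ) (ha1 : a1 < 0) (ha2 : a2 < 0)
    (hcons : lam2 = lam1 - 1) (hl1 : 1/2 ≤ lam1) (hl2 : -(1/2) ≤ lam2) :
    ∃ η : ℝ, 0 < η ∧
      (!![(1/2 - lam1) * a1, (a2 * lam1 + a1 * η * lam2) / 2;
          (a2 * lam1 + a1 * η * lam2) / 2, -(lam2 + 1/2) * η * a2] :
        Matrix (Fin 2) (Fin 2) ℝ).PosSemidef := by
  refine ⟨a2 / a1, div_pos_of_neg_of_neg ha2 ha1, posSemidef_iff_dotProduct_mulVec.mpr ⟨?_, ?_⟩⟩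
  · ext i j
    fin_cases i <;> fin_cases j <;>
      simp [Matrix.conjTranspose, Matrix.vecHead, Matrix.vecTail]
  · intro x
    have ha1' : a1 ≠ 0 := ne_of_lt ha1
    have he : a1 * (a2 / a1) = a2 := by field_simp
    have hc : 0 ≤ lam2 + 1/2 := by linarith
    have hsq := mul_nonneg hc (sq_nonneg (a1 * x 0 - a2 * x 1))
    simp [Matrix.mulVec, dotProduct, Fin.sum_univ_two]
    subst hcons
    have key : x 0 * ((2⁻¹ - lam1) * a1 * x 0 + (a2 * lam1 + a1 * (a2 / a1) * (lam1 - 1)) / 2 * x 1) +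
        x 1 * ((a2 * lam1 + a1 * (a2 / a1) * (lam1 - 1)) / 2 * x 0 + (-2⁻¹ + -(lam1 - 1)) * (a2 / a1) * a2 * x 1)
        = ((lam1 - 1 + 1/2) * (a1 * x 0 - a2 * x 1) ^ 2) / (-a1) := by
      field_simp
      ring
    rw [key]
    exact div_nonneg hsq (by linarith)
end

section
/- Let $a_1, a_2 - x'_\Gamma$ be replaced by $\tilde{a}_1 = a_1 - x'_\Gamma$ and $\tilde{a}_2 = a_2 - x'_\Gamma$, both strictly positive reals, and let $\lambda_1 \le 1/2$, $\lambda_2 = \lambda_1 - 1 \le -1/2$. Then there exists $\eta > 0$ (for instance any $\eta$ with $\frac{(\lambda_2+1)^2}{\lambda_2^2} \le \eta\,\tilde{a}_1/\tilde{a}_2 \le 1$) such that the matrix $S = \begin{pmatrix} (\tfrac12 - \lambda_1)\tilde{a}_1 & \tfrac12(\tilde{a}_2\lambda_1 + \tilde{a}_1\eta\lambda_2) \\ \tfrac12(\tilde{a}_2\lambda_1 + \tilde{a}_1\eta\lambda_2) & -(\tfrac12 + \lambda_2)\eta\tilde{a}_2 \end{pmatrix}$ is positive semi-definite, and moreover the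 lower bound satisfies $\frac{(\lambda_2+1)^2}{\lambda_2^2} \le 1$ so the admissible interval for $\eta\,\tilde{a}_1/\tilde{a}_2$ is nonempty (note $\lambda_2 \le -1/2$ implies $(\lambda_2+1)^2 \le \lambda_2^2$). -/
open Matrix

theorem stmt_19 (ta1 ta2 lam1 lam2 : ℝ) (hta1 : 0 < ta1) (hta2 : 0 < ta2)
    (hl1 : lam1 ≤ 1/2) (hcons : lam2 = lam1 - 1) (hl2 : lam2 ≤ -(1/2)) :
    (lam2 + 1)^2 / lam2^2 ≤ 1 ∧
    ∃ η : ℝ, 0 < η ∧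
      ((lam2 + 1)^2 / lam2^2 ≤ η * ta1 / ta2 ∧ η * ta1 / ta2 ≤ 1) ∧
      (!![(1/2 - lam1) * ta1, (ta2 * lam1 + ta1 * η * lam2) / 2;
          (ta2 * lam1 + ta1 * η * lam2) / 2, -(1/2 + lam2) * η * ta2] :
        Matrix (Fin 2) (Fin 2) ℝ).PosSemidef := by
  have hl2' : lam2 ≠ 0 := by nlinarith
  have hsq : (0:ℝ) < lam2^2 := by positivity
  have hle1 : (lam2 + 1)^2 / lam2^2 ≤ 1 := by
    rw [div_le_one hsq]; nlinarith
  refine ⟨hle1, ta2 / ta1, by positivity, ?_, ?_⟩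
  · have : ta2 / ta1 * ta1 / ta2 = 1 := by field_simp
    rw [this]; exact ⟨hle1, le_refl 1⟩
  · rw [Matrix.posSemidef_iff_dotProduct_mulVec]
    constructor
    · ext i j
      fin_cases i <;> fin_cases j <;>
        simp [Matrix.conjTranspose_apply]
    · intro x
      have hx : ∀ i, (star x) i = x i := fun i => rfl
      simp only [dotProduct, mulVec, Fin.sum_univ_two, RCLike.re_to_real]
      have e0 : (star x) 0 = x 0 := rfl
      have e1 : (star x) 1 = x 1 := rfl
      rw [e0, e1]
      simp only [Matrix.cons_val', Matrix.cons_val_zero, Matrix.cons_val_one,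
        Matrix.head_cons, Matrix.empty_val', Matrix.cons_val_fin_one, Matrix.head_fin_const,
        Matrix.of_apply, Matrix.cons_val_one, Matrix.head_cons]
      have key : x 0 * ((1/2 - lam1) * ta1 * x 0 + (ta2 * lam1 + ta1 * (ta2/ta1) * lam2) / 2 * x 1)
          + x 1 * ((ta2 * lam1 + ta1 * (ta2/ta1) * lam2) / 2 * x 0 + -(1/2 + lam2) * (ta2/ta1) * ta2 * x 1)
          = (1/2 - lam1) / ta1 * (ta1 * x 0 - ta2 * x 1)^2 := by
        subst hcons
        field_simp
        ring
      rw [key]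
      have h : 0 ≤ (1/2 - lam1) / ta1 :=
        div_nonneg (by linarith) hta1.le
      exact mul_nonneg h (sq_nonneg _)
end
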